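/- arXiv:2112.12986 — 3 statements merged into one kernel-verified Lean document; each statement's English description precedes it below -/
import Mathlib

section
/- The function ℓ_{α,β}(z) defined as 1/(z-(β-1))^α for z ≥ β and as -(z-β)+1 for z < β, with α = 1, is convex, differentiable, and strictly decreasing on ℝ. -/
/-! Both pieces take the value `1` with slope `-1` at `β`, so `ℓ` is differentiable with derivative
`-1` on `(-∞, β)` and `-1/(z - β + 1)²` on `[β, ∞)`. This derivative is negative and nondecreasing,
which gives strict antitonicity and convexity. -/

open Set

section Gluing

variable {f g f' g' : ℝ → ℝ} {a : ℝ}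

theorem hasDerivAt_ite_lt (hf : ∀ x ≤ a, HasDerivAt f (f' x) x)
    (hg : ∀ x ≥ a, HasDerivAt g (g' x) x) (hfg : f a = g a) (hfg' : f' a = g' a) (x : ℝ) :
    HasDerivAt (fun y => if y < a then f y else g y) (if x < a then f' x else g' x) x := by
  rcases lt_trichotomy x a with hxa | rfl | hax
  · rw [if_pos hxa]
    refine (hf x hxa.le).congr_of_eventuallyEq ?_
    filter_upwards [Iio_mem_nhds hxa] with y hy
    rw [if_pos (mem_Iio.mp hy)]
  · rw [if_neg (lt_irrefl x)]
    have left : HasDerivWithinAt (fun y => if y < x then f y else g y) (g' x) (Iic x) x := by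
      refine (hfg' ▸ hf x le_rfl).hasDerivWithinAt.congr (fun y hy => ?_) (by simp [hfg])
      rcases (mem_Iic.mp hy).lt_or_eq with hyx | rfl
      · rw [if_pos hyx]
      · simp [hfg]
    have right : HasDerivWithinAt (fun y => if y < x then f y else g y) (g' x) (Ici x) x :=
      (hg x le_rfl).hasDerivWithinAt.congr (fun y hy => by simp [not_lt.mpr (mem_Ici.mp hy)])
        (by simp)
    simpa only [Iic_union_Ici, hasDerivWithinAt_univ] using left.union right
  · rw [if_neg hax.not_gt]
    refine (hg x hax.le).congr_of_eventuallyEq ?_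
    filter_upwards [Ioi_mem_nhds hax] with y hy
    rw [if_neg (mem_Ioi.mp hy).not_gt]

theorem monotone_ite_lt (hf' : MonotoneOn f' (Iic a)) (hg' : MonotoneOn g' (Ici a))
    (hfg' : f' a = g' a) : Monotone fun x => if x < a then f' x else g' x := by
  intro x y hxy
  dsimp only
  split_ifs with hx hy hy
  · exact hf' hx.le hy.le hxy
  · calc f' x ≤ f' a := hf' hx.le self_mem_Iic (by linarith)
      _ = g' a := hfg'
      _ ≤ g' y := hg' self_mem_Ici (not_lt.mp hy) (not_lt.mp hy)
  · exact absurd (hxy.trans_lt hy) hx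
  · exact hg' (not_lt.mp hx) (not_lt.mp hy) hxy

end Gluing

theorem hasDerivAt_inv_sub {c x : ℝ} (hx : x ≠ c) :
    HasDerivAt (fun y => 1 / (y - c)) (-1 / (x - c) ^ 2) x := by
  simpa [one_div, neg_div, Pi.inv_def] using
    ((hasDerivAt_id x).sub_const c).inv (sub_ne_zero.mpr hx)

theorem monotoneOn_neg_one_div_sub_sq (c : ℝ) :
    MonotoneOn (fun y => -1 / (y - c) ^ 2) (Ioi c) := by
  intro x hx y hy hxy
  have hx : 0 < x - c := sub_pos.mpr hx
  simp only [neg_div, neg_le_neg_iff]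
  gcongr

theorem Monotone.convexOn_univ_of_hasDerivAt {f f' : ℝ → ℝ} (hf : ∀ x, HasDerivAt f (f' x) x)
    (hf' : Monotone f') : ConvexOn ℝ univ f :=
  Monotone.convexOn_univ_of_deriv (fun x => (hf x).differentiableAt)
    (funext (fun x => (hf x).deriv) ▸ hf')

/-- The polynomially-tailed loss with `α = 1`: linear left part and tail `1/(z-β+1)`,
is convex, differentiable and strictly decreasing on ℝ. -/
theorem polyTailLoss_convex_differentiable_strictAnti (β : ℝ) (ℓ : ℝ → ℝ)
    (hℓ : ∀ z : ℝ, ℓ z = if z < β then -(z - β) + 1 else 1 / (z - (β - 1))) :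
    ConvexOn ℝ Set.univ ℓ ∧ Differentiable ℝ ℓ ∧ StrictAnti ℓ := by
  obtain rfl := funext hℓ
  have hderiv := hasDerivAt_ite_lt (f := fun z => -(z - β) + 1) (g := fun z => 1 / (z - (β - 1)))
    (f' := fun _ => -1) (g' := fun z => -1 / (z - (β - 1)) ^ 2)
    (fun x _ => by simpa using ((hasDerivAt_id x).sub_const β).neg.add_const 1)
    (fun x hx => hasDerivAt_inv_sub (by linarith)) (by norm_num) (by norm_num)
  have hmono := monotone_ite_lt (monotoneOn_const (s := Iic β) (c := (-1 : ℝ)))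
    ((monotoneOn_neg_one_div_sub_sq (β - 1)).mono (Ici_subset_Ioi.mpr (by linarith)))
    (by norm_num)
  refine ⟨hmono.convexOn_univ_of_hasDerivAt hderiv, fun x => (hderiv x).differentiableAt,
    strictAnti_of_hasDerivAt_neg hderiv fun x => ?_⟩
  split_ifs with hx
  · norm_num
  · have : 0 < x - (β - 1) := by linarith [not_lt.mp hx]
    exact div_neg_of_neg_of_pos (by norm_num) (by positivity)
end

section
/- Suppose μ_1, μ_2 ∈ ℝ^d satisfy μ_1·μ_2 = 0 and ‖μ_1‖ = ‖μ_2‖ = ‖μ‖, the samples satisfy z_i = μ_1 + Uq_i for i ∈ 𝒫 and z_i = μ_2 + Uq_i for i ∈ 𝒩 with U orthogonal. Assume for all i: ‖z_i‖² ≥ d/c, |μ_1·z_i - ‖μ‖²| < ‖μ‖²/2 for i ∈ 𝒫, |(-μ_2)·z_i - ‖μ‖²| < ‖μ‖²/2 for i ∈ 𝒩, |z_i·z_j| ≤ c(‖μ‖² + √(d log(n/δ))) for i ≠ j, and d ≥ C n ‖μ‖² with ‖μ‖² ≥ C n² log(n/δ) for a sufficiently large constant C. Then the vector v = ∑_i z_i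 satisfies v·z_k ≥ d/(2c) for every k, and ‖v‖² ≤ 2c n d; hence the unit vector φ = v/‖v‖ achieves margin φ·z_k ≥ c'√(d/n) on every sample z_k, so in particular the data is linearly separable. -/
/-!
Write `v = ∑ i, z i`. Expanding `⟪v, z k⟫` and `‖v‖² = ∑ k ⟪v, z k⟫` in the Gram matrix, each
diagonal entry is `Θ(d)` while the `n - 1` off-diagonal entries of a row are at most
`B = c (‖μ‖² + √(d log(n/δ)))` in absolute value. The scaling `d ≥ C n ‖μ‖²`,
`‖μ‖² ≥ C n² log(n/δ)` makes `n B ≤ d/(2c)`, so `⟪v, z k⟫ ≥ d/c - d/(2c)` and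
`‖v‖² ≤ n (c d + d/(2c)) ≤ 2cnd`; dividing gives the margin of `v / ‖v‖`.
-/

open scoped RealInnerProductSpace
open Finset

section Gram

variable {ι E : Type*} [Fintype ι] [NormedAddCommGroup E] [InnerProductSpace ℝ E]
  {z : ι → E} {B : ℝ}

theorem abs_inner_sum_sub_norm_sq_le (hB : ∀ i j, i ≠ j → |⟪z i, z j⟫| ≤ B) (k : ι) :
    |⟪∑ i, z i, z k⟫ - ‖z k‖ ^ 2| ≤ (Fintype.card ι - 1) * B := by
  classical
  have hsplit : ⟪∑ i, z i, z k⟫ - ‖z k‖ ^ 2 = ∑ i ∈ univ.erase k, ⟪z i, z k⟫ := by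
    rw [sum_inner, ← add_sum_erase _ _ (mem_univ k), real_inner_self_eq_norm_sq,
      add_sub_cancel_left]
  have hcard : ((univ.erase k).card : ℝ) = Fintype.card ι - 1 := by
    rw [card_erase_of_mem (mem_univ k), card_univ, Nat.cast_pred (Fintype.card_pos_iff.2 ⟨k⟩)]
  calc |⟪∑ i, z i, z k⟫ - ‖z k‖ ^ 2|
      ≤ ∑ i ∈ univ.erase k, |⟪z i, z k⟫| := hsplit ▸ abs_sum_le_sum_abs _ _
    _ ≤ ∑ _i ∈ univ.erase k, B := sum_le_sum fun i hi => hB i k (ne_of_mem_erase hi)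
    _ = (Fintype.card ι - 1) * B := by rw [sum_const, nsmul_eq_mul, hcard]

theorem norm_sum_sq_le_of_abs_inner_le (hB : ∀ i j, i ≠ j → |⟪z i, z j⟫| ≤ B) {b : ℝ}
    (hb : ∀ k, ‖z k‖ ^ 2 ≤ b) :
    ‖∑ i, z i‖ ^ 2 ≤ Fintype.card ι * (b + (Fintype.card ι - 1) * B) := by
  calc ‖∑ i, z i‖ ^ 2 = ∑ k, ⟪∑ i, z i, z k⟫ := by
        rw [← real_inner_self_eq_norm_sq, inner_sum]
    _ ≤ ∑ _k : ι, (b + (Fintype.card ι - 1) * B) := sum_le_sum fun k _ => by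
        linarith [le_of_abs_le (abs_inner_sum_sub_norm_sq_le hB k), hb k]
    _ = Fintype.card ι * (b + (Fintype.card ι - 1) * B) := by
        rw [sum_const, nsmul_eq_mul, card_univ]

end Gram

theorem div_sqrt_le_inner_normalize {E : Type*} [NormedAddCommGroup E] [InnerProductSpace ℝ E]
    {v x : E} {a s : ℝ} (ha : 0 ≤ a) (hav : a ≤ ⟪v, x⟫) (hvs : ‖v‖ ^ 2 ≤ s) :
    a / √s ≤ ⟪‖v‖⁻¹ • v, x⟫ := by
  rw [real_inner_smul_left, inv_mul_eq_div]
  rcases (norm_nonneg v).eq_or_lt with hv | hv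
  · rw [eq_comm, norm_eq_zero] at hv
    subst hv
    rw [inner_zero_left] at hav
    rw [le_antisymm hav ha, zero_div, inner_zero_left, zero_div]
  · have hvs' : ‖v‖ ≤ √s := Real.le_sqrt_of_sq_le hvs
    calc a / √s ≤ a / ‖v‖ := div_le_div_of_nonneg_left ha hv hvs'
      _ ≤ ⟪v, x⟫ / ‖v‖ := div_le_div_of_nonneg_right hav hv.le

theorem mul_sqrt_mul_le_div {C d n M L : ℝ} (hC : 0 < C) (hd : 0 ≤ d) (hn : 1 ≤ n)
    (hdM : C * n * M ≤ d) (hML : C * n ^ 2 * L ≤ M) : n * √(d * L) ≤ d / C := by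
  have hM : M ≤ d / C := by
    rw [le_div_iff₀ hC]
    rcases le_or_gt 0 M with hM | hM <;> nlinarith
  have hnL : n ^ 2 * L ≤ M / C := by rw [le_div_iff₀ hC]; linarith
  rw [← Real.sqrt_sq (by linarith : 0 ≤ n), ← Real.sqrt_mul (by positivity),
    Real.sqrt_le_left (by positivity)]
  calc n ^ 2 * (d * L) = d * (n ^ 2 * L) := by ring
    _ ≤ d * (d / C / C) := mul_le_mul_of_nonneg_left (hnL.trans (by gcongr)) hd
    _ = (d / C) ^ 2 := by ring

theorem mul_offDiag_bound_le {c C d n M L : ℝ} (hc : 0 < c) (hC : 4 * c ^ 2 ≤ C)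
    (hd : 0 ≤ d) (hn : 1 ≤ n) (hdM : C * n * M ≤ d) (hML : C * n ^ 2 * L ≤ M) :
    n * (c * (M + √(d * L))) ≤ d / (2 * c) := by
  have hC0 : 0 < C := by nlinarith
  have hsqrt := mul_sqrt_mul_le_div hC0 hd hn hdM hML
  have hM : C * (n * M) ≤ d := by linarith
  have hns : C * (n * √(d * L)) ≤ d := by rwa [le_div_iff₀' hC0] at hsqrt
  rw [le_div_iff₀ (by positivity)]
  have hs : 0 ≤ n * √(d * L) := by positivity
  rcases le_or_gt 0 M with hM0 | hM0 <;> nlinarith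

theorem one_div_mul_sqrt_div_eq_div_div_sqrt {a d n : ℝ} (ha : 0 < a) (hd : 0 < d)
    (hn : 0 < n) : 1 / (a * √a) * √(d / n) = d / a / √(a * n * d) := by
  rw [Real.sqrt_div hd.le, Real.sqrt_mul (by positivity : 0 ≤ a * n) d, Real.sqrt_mul ha.le n]
  have hd' : √d ^ 2 = d := Real.sq_sqrt hd.le
  have : 0 < √n := Real.sqrt_pos.2 hn
  have : 0 < √d := Real.sqrt_pos.2 hd
  have : 0 < √a := Real.sqrt_pos.2 ha
  field_simp
  rw [hd']

/-- The sum of the samples achieves margin `d/(2c)` on every point and has squared norm at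
most `2cnd`; hence the unit vector in its direction achieves margin `Ω(√(d/n))` on every
sample, and in particular the data is linearly separable. -/
theorem mean_direction_margin (c : ℝ) (hc : 1 ≤ c) :
    ∃ C₀ : ℝ, ∀ C : ℝ, C ≥ C₀ →
      ∀ (d n : ℕ), 0 < d → 0 < n →
      ∀ (δ : ℝ), 0 < δ → δ < 1 →
      ∀ (μ1 μ2 : EuclideanSpace ℝ (Fin d))
        (z q : Fin n → EuclideanSpace ℝ (Fin d))
        (U : EuclideanSpace ℝ (Fin d) ≃ₗᵢ[ℝ] EuclideanSpace ℝ (Fin d))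
        (Ps Ns : Finset (Fin n)),
        (inner ℝ μ1 μ2 : ℝ) = 0 → ‖μ1‖ = ‖μ2‖ →
        Disjoint Ps Ns → Ps ∪ Ns = Finset.univ →
        (∀ i ∈ Ps, z i = μ1 + U (q i)) → (∀ i ∈ Ns, z i = μ2 + U (q i)) →
        (∀ i, (d : ℝ) / c ≤ ‖z i‖ ^ 2 ∧ ‖z i‖ ^ 2 ≤ c * d) →
        (∀ i ∈ Ps, |(inner ℝ μ1 (z i) : ℝ) - ‖μ1‖ ^ 2| < ‖μ1‖ ^ 2 / 2) →
        (∀ i ∈ Ns, |(inner ℝ (-μ2) (z i) : ℝ) - ‖μ1‖ ^ 2| < ‖μ1‖ ^ 2 / 2) →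
        (∀ i j, i ≠ j →
          |(inner ℝ (z i) (z j) : ℝ)| ≤ c * (‖μ1‖ ^ 2 + Real.sqrt (d * Real.log (n / δ)))) →
        (d : ℝ) ≥ C * n * ‖μ1‖ ^ 2 → ‖μ1‖ ^ 2 ≥ C * n ^ 2 * Real.log (n / δ) →
        (∀ k, (inner ℝ (∑ i, z i) (z k) : ℝ) ≥ d / (2 * c)) ∧
        ‖∑ i, z i‖ ^ 2 ≤ 2 * c * n * d ∧
        (∀ k, (inner ℝ ((‖∑ i, z i‖)⁻¹ • ∑ i, z i) (z k) : ℝ) ≥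
          (1 / (2 * c * Real.sqrt (2 * c))) * Real.sqrt (d / n)) ∧
        (∃ u : EuclideanSpace ℝ (Fin d), ∀ k, 0 < (inner ℝ u (z k) : ℝ)) := by
  refine ⟨4 * c ^ 2, fun C hC d n hd hn δ _ _ μ1 μ2 z q U Ps Ns _ _ _ _ _ _ hnorm _ _ hB hdM hML ↦
    ?_⟩
  set B := c * (‖μ1‖ ^ 2 + √(d * Real.log (n / δ)))
  have hc0 : 0 < c := by linarith
  have hn1 : (1 : ℝ) ≤ n := by exact_mod_cast hn
  have hd0 : (0 : ℝ) < d := by exact_mod_cast hd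
  have hB0 : 0 ≤ B := by positivity
  have hbudget : ((n : ℝ) - 1) * B ≤ d / (2 * c) :=
    (mul_le_mul_of_nonneg_right (by linarith) hB0).trans
      (mul_offDiag_bound_le hc0 hC hd0.le hn1 (by linarith) (by linarith))
  have hmargin : ∀ k, d / (2 * c) ≤ ⟪∑ i, z i, z k⟫ := fun k => by
    have hdev := neg_le_of_abs_le (abs_inner_sum_sub_norm_sq_le hB k)
    have hhalf : (d : ℝ) / c = d / (2 * c) + d / (2 * c) := by field_simp; ring
    rw [Fintype.card_fin] at hdev
    linarith [(hnorm k).1]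
  have hnorm_sum : ‖∑ i, z i‖ ^ 2 ≤ 2 * c * n * d := by
    have hsq := norm_sum_sq_le_of_abs_inner_le hB fun k => (hnorm k).2
    have hsmall : (d : ℝ) / (2 * c) ≤ c * d := by
      rw [div_le_iff₀ (by positivity)]
      nlinarith [mul_le_mul_of_nonneg_right (by nlinarith : 1 ≤ 2 * c * c) hd0.le]
    rw [Fintype.card_fin] at hsq
    nlinarith
  have hmargin_pos : (0 : ℝ) < d / (2 * c) := by positivity
  refine ⟨hmargin, hnorm_sum, fun k => ?_, ∑ i, z i, fun k => hmargin_pos.trans_le (hmargin k)⟩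
  rw [ge_iff_le, one_div_mul_sqrt_div_eq_div_div_sqrt (by positivity) hd0 (by positivity)]
  exact div_sqrt_le_inner_normalize hmargin_pos.le (hmargin k) hnorm_sum
end

section
/- Suppose gradient descent on the exponential loss L(θ) = ∑_{i∈[n]} exp(-z_i·θ) with step size η and θ^{(0)} = 0 produces a non-increasing loss sequence. If d/c ≤ ‖z_i‖² ≤ cd for all i, |z_i·z_j| ≤ c(‖μ‖² + √(d log(n/δ))) for i ≠ j, d ≥ C n‖μ‖² ≥ C² n³ log(n/δ) for a sufficiently large C, and η is sufficiently small (η ≤ (log 2)/(2c n d) suffices), then for all t ≥ 0 and all i, j: exp(-z_i·θ^{(t)}) / exp(-z_j·θ^{(t)}) ≤ 4c². -/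
/-!
Write `ℓₜ(k) = exp(-⟪z_k, θₜ⟫)`. One gradient step multiplies `ℓₜ(k)` by `exp(-η Sₜ(k))`, where
`Sₜ = ℓₜ ᵥ* gram z`. We keep the invariant `ℓₜ(i) ≤ 4c² ℓₜ(j)`. If `ℓₜ(i) ≤ 2c² ℓₜ(j)`, the small
step size lets the ratio at most double: the total loss never exceeds its initial value `n`, so
`|Sₜ(k)| ≤ c d n`. Otherwise sample `i` is far ahead in loss; as the Gram matrix is nearly
diagonal, its diagonal term dominates, so `Sₜ(j) ≤ Sₜ(i)` and the ratio does not grow.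
-/

open Real Finset Matrix

open scoped InnerProductSpace

namespace ExpLossGD

lemma exp_neg_mul_le_two_mul_exp_neg {x y K η : ℝ} (hx : |x| ≤ K) (hy : |y| ≤ K) (hη : 0 ≤ η)
    (hηK : η * (2 * K) ≤ log 2) :
    exp (-(η * x)) ≤ 2 * exp (-(η * y)) := by
  have hyx : η * (y - x) ≤ η * (2 * K) :=
    mul_le_mul_of_nonneg_left (by linarith [abs_le.mp hx, abs_le.mp hy]) hη
  rw [← exp_log two_pos, ← exp_add]
  exact exp_le_exp.mpr (by linarith)

variable {ι : Type*}

section WeightedGram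

variable [Fintype ι]

section

variable (G : Matrix ι ι ℝ) (ℓ : ι → ℝ)

lemma abs_vecMul_le {b : ℝ} (hℓ : ∀ m, 0 ≤ ℓ m) (hG : ∀ m k, |G m k| ≤ b) (k : ι) :
    |(ℓ ᵥ* G) k| ≤ b * ∑ m, ℓ m :=
  calc |∑ m, ℓ m * G m k|
      ≤ ∑ m, |ℓ m * G m k| := abs_sum_le_sum_abs _ _
    _ ≤ ∑ m, ℓ m * b := sum_le_sum fun m _ => by
        rw [abs_mul, abs_of_nonneg (hℓ m)]
        exact mul_le_mul_of_nonneg_left (hG m k) (hℓ m)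
    _ = b * ∑ m, ℓ m := by rw [← sum_mul, mul_comm]

lemma abs_vecMul_sub_diag_le {L B : ℝ} (hℓ : ∀ m, 0 ≤ ℓ m) (hL : ∀ m, ℓ m ≤ L)
    (hoff : ∀ m k, m ≠ k → |G m k| ≤ B) (hB : 0 ≤ B) (k : ι) :
    |(ℓ ᵥ* G) k - ℓ k * G k k| ≤ Fintype.card ι * (L * B) := by
  classical
  have hsplit : (ℓ ᵥ* G) k - ℓ k * G k k = ∑ m ∈ univ.erase k, ℓ m * G m k := by
    rw [vecMul, dotProduct, ← add_sum_erase _ _ (mem_univ k), add_sub_cancel_left]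
  rw [hsplit]
  calc |∑ m ∈ univ.erase k, ℓ m * G m k|
      ≤ ∑ m ∈ univ.erase k, |ℓ m * G m k| := abs_sum_le_sum_abs _ _
    _ ≤ ∑ _m ∈ univ.erase k, L * B := sum_le_sum fun m hm => by
        rw [abs_mul, abs_of_nonneg (hℓ m)]
        exact mul_le_mul (hL m) (hoff m k (ne_of_mem_erase hm)) (abs_nonneg _)
          ((hℓ m).trans (hL m))
    _ ≤ Fintype.card ι * (L * B) := by
        rw [sum_const, nsmul_eq_mul]
        gcongr
        · exact mul_nonneg ((hℓ k).trans (hL k)) hB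
        · exact_mod_cast card_le_univ _

end

theorem mul_exp_neg_vecMul_le {G : Matrix ι ι ℝ} {ℓ : ι → ℝ} {R a b B N η : ℝ}
    (hℓ : ∀ m, 0 < ℓ m) (hratio : ∀ i j, ℓ i ≤ R * ℓ j) (hsum : ∑ m, ℓ m ≤ N)
    (hdiag : ∀ k, a ≤ G k k ∧ G k k ≤ b) (hG : ∀ m k, |G m k| ≤ b)
    (hoff : ∀ m k, m ≠ k → |G m k| ≤ B) (hB : 0 ≤ B) (hη : 0 ≤ η)
    (hηb : η * (2 * (b * N)) ≤ log 2) (hgap : 2 * b + 2 * Fintype.card ι * R ^ 2 * B ≤ R * a)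
    (i j : ι) :
    ℓ i * exp (-(η * (ℓ ᵥ* G) i)) ≤ R * (ℓ j * exp (-(η * (ℓ ᵥ* G) j))) := by
  have hℓ0 m := (hℓ m).le
  have hR : 1 ≤ R := le_of_mul_le_mul_right (by simpa using hratio i i) (hℓ i)
  have hRℓj : 0 ≤ R * ℓ j := mul_nonneg (by linarith) (hℓ0 j)
  have hb : 0 ≤ b := (abs_nonneg _).trans (hG i i)
  by_cases hclose : 2 * ℓ i ≤ R * ℓ j
  · have habs k : |(ℓ ᵥ* G) k| ≤ b * N :=
      (abs_vecMul_le G ℓ hℓ0 hG k).trans (mul_le_mul_of_nonneg_left hsum hb)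
    calc ℓ i * exp (-(η * (ℓ ᵥ* G) i))
        ≤ (R * ℓ j / 2) * (2 * exp (-(η * (ℓ ᵥ* G) j))) := by
          refine mul_le_mul (by linarith) ?_ (exp_pos _).le (by linarith)
          exact exp_neg_mul_le_two_mul_exp_neg (habs i) (habs j) hη hηb
      _ = R * (ℓ j * exp (-(η * (ℓ ᵥ* G) j))) := by ring
  · -- Every weight is at most `R ℓ i`, so the off-diagonal terms are small against `ℓ i * a`.
    have hoffi := abs_le.mp <| abs_vecMul_sub_diag_le G ℓ hℓ0 (fun m => hratio m i) hoff hB i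
    have hoffj := abs_le.mp <| abs_vecMul_sub_diag_le G ℓ hℓ0 (fun m => hratio m i) hoff hB j
    have hdom : ℓ j * b + 2 * Fintype.card ι * (R * ℓ i * B) ≤ ℓ i * a := by
      refine le_of_mul_le_mul_left ?_ (by linarith : 0 < R)
      nlinarith [mul_le_mul_of_nonneg_right (not_le.mp hclose).le hb,
        mul_le_mul_of_nonneg_left hgap (hℓ0 i)]
    have hgain : (ℓ ᵥ* G) j ≤ (ℓ ᵥ* G) i := by
      nlinarith [mul_le_mul_of_nonneg_left (hdiag i).1 (hℓ0 i),
        mul_le_mul_of_nonneg_left (hdiag j).2 (hℓ0 j)]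
    calc ℓ i * exp (-(η * (ℓ ᵥ* G) i))
        ≤ (R * ℓ j) * exp (-(η * (ℓ ᵥ* G) j)) := by
          refine mul_le_mul (hratio i j) ?_ (exp_pos _).le hRℓj
          exact exp_le_exp.mpr (neg_le_neg (mul_le_mul_of_nonneg_left hgain hη))
      _ = R * (ℓ j * exp (-(η * (ℓ ᵥ* G) j))) := by ring

end WeightedGram

section Trajectory

variable {E : Type*} [NormedAddCommGroup E] [InnerProductSpace ℝ E] (z : ι → E)

noncomputable def expLoss (θ : E) (k : ι) : ℝ := exp (-⟪z k, θ⟫_ℝ)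

lemma expLoss_zero (k : ι) : expLoss z 0 k = 1 := by
  simp [expLoss]

variable [Fintype ι]

lemma expLoss_gd_step {θ θ' : E} {η : ℝ} (hθ' : θ' = θ + η • ∑ m, expLoss z θ m • z m) (k : ι) :
    expLoss z θ' k = expLoss z θ k * exp (-(η * (expLoss z θ ᵥ* gram ℝ z) k)) := by
  have hinner : ⟪z k, θ'⟫_ℝ = ⟪z k, θ⟫_ℝ + η * (expLoss z θ ᵥ* gram ℝ z) k := by
    simp only [hθ', inner_add_right, inner_smul_right, inner_sum, vecMul, dotProduct,
      gram_apply, real_inner_comm (z k)]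
  rw [expLoss, expLoss, hinner, neg_add, exp_add]

lemma sum_expLoss_le_card {θ : ℕ → E} (hθ0 : θ 0 = 0)
    (hmono : ∀ t, ∑ k, expLoss z (θ (t + 1)) k ≤ ∑ k, expLoss z (θ t) k) (t : ℕ) :
    ∑ k, expLoss z (θ t) k ≤ Fintype.card ι := by
  have := antitone_nat_of_succ_le (f := fun t => ∑ k, expLoss z (θ t) k) hmono (Nat.zero_le t)
  simpa [hθ0, expLoss_zero] using this

lemma abs_real_inner_le_of_norm_sq_le {x y : E} {b : ℝ} (hx : ‖x‖ ^ 2 ≤ b) (hy : ‖y‖ ^ 2 ≤ b) :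
    |⟪x, y⟫_ℝ| ≤ b :=
  (abs_real_inner_le_norm x y).trans <| by
    nlinarith [sq_nonneg (‖x‖ - ‖y‖)]

theorem expLoss_le_mul_of_gd {θ : ℕ → E} {R a b B η : ℝ} (hθ0 : θ 0 = 0)
    (hupd : ∀ t, θ (t + 1) = θ t + η • ∑ m, expLoss z (θ t) m • z m)
    (hmono : ∀ t, ∑ k, expLoss z (θ (t + 1)) k ≤ ∑ k, expLoss z (θ t) k)
    (hnorm : ∀ k, a ≤ ‖z k‖ ^ 2 ∧ ‖z k‖ ^ 2 ≤ b) (hoff : ∀ m k, m ≠ k → |⟪z m, z k⟫_ℝ| ≤ B)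
    (hB : 0 ≤ B) (hη : 0 ≤ η) (hηb : η * (2 * (b * Fintype.card ι)) ≤ log 2)
    (hgap : 2 * b + 2 * Fintype.card ι * R ^ 2 * B ≤ R * a) (hR : 1 ≤ R) (t : ℕ) (i j : ι) :
    expLoss z (θ t) i ≤ R * expLoss z (θ t) j := by
  induction t generalizing i j with
  | zero => simpa [hθ0, expLoss_zero] using hR
  | succ t ih =>
    rw [expLoss_gd_step z (hupd t), expLoss_gd_step z (hupd t)]
    refine mul_exp_neg_vecMul_le (fun m => exp_pos _) ih (sum_expLoss_le_card z hθ0 hmono t)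
      (fun k => ?_) (fun m k => ?_) hoff hB hη hηb hgap i j
    · simpa only [gram_apply, real_inner_self_eq_norm_sq] using hnorm k
    · exact abs_real_inner_le_of_norm_sq_le (hnorm m).2 (hnorm k).2

end Trajectory

lemma add_sqrt_mul_le_of_le {C d n M L : ℝ} (hC : 0 < C) (hn : 1 ≤ n) (hM : 0 ≤ M)
    (hdM : d ≥ C * n * M) (hML : C * n * M ≥ C ^ 2 * n ^ 3 * L) :
    M + √(d * L) ≤ 2 * d / (C * n) := by
  have hCn : 0 < C * n := by positivity
  have hd : 0 ≤ d := le_trans (by positivity) hdM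
  have hM' : M ≤ d / (C * n) := by rw [le_div_iff₀ hCn]; linarith
  have hsqrt : √(d * L) ≤ d / (C * n) := by
    refine sqrt_le_iff.mpr ⟨by positivity, ?_⟩
    have hL : (C * n) ^ 2 * L ≤ d := by nlinarith
    rw [div_pow, le_div_iff₀ (by positivity)]
    nlinarith
  linarith [show 2 * d / (C * n) = d / (C * n) + d / (C * n) by ring]

end ExpLossGD

open ExpLossGD in
/-- Loss-ratio boundedness for gradient descent on the exponential loss: under the stated
norm/inner-product bounds and overparameterization, the per-sample losses stay within a
factor `4c²` of each other at every iteration. -/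
theorem exp_loss_ratio_bounded (c : ℝ) (hc : 1 ≤ c) :
    ∃ C₀ : ℝ, ∀ C : ℝ, C ≥ C₀ →
      ∀ (d n : ℕ), 0 < d → 0 < n →
      ∀ (δ M η : ℝ), 0 < δ → δ < 1 → 0 ≤ M →
        0 < η → η ≤ Real.log 2 / (2 * c * n * d) →
      ∀ (z : Fin n → EuclideanSpace ℝ (Fin d)) (θ : ℕ → EuclideanSpace ℝ (Fin d)),
        θ 0 = 0 →
        (∀ t, θ (t + 1) = θ t + η • ∑ i, Real.exp (-(inner ℝ (z i) (θ t) : ℝ)) • z i) →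
        (∀ t, ∑ i, Real.exp (-(inner ℝ (z i) (θ (t + 1)) : ℝ)) ≤
          ∑ i, Real.exp (-(inner ℝ (z i) (θ t) : ℝ))) →
        (∀ i, (d : ℝ) / c ≤ ‖z i‖ ^ 2 ∧ ‖z i‖ ^ 2 ≤ c * d) →
        (∀ i j, i ≠ j →
          |(inner ℝ (z i) (z j) : ℝ)| ≤ c * (M + Real.sqrt (d * Real.log (n / δ)))) →
        (d : ℝ) ≥ C * n * M → C * n * M ≥ C ^ 2 * n ^ 3 * Real.log (n / δ) →
        ∀ (t : ℕ) (i j : Fin n),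
          Real.exp (-(inner ℝ (z i) (θ t) : ℝ)) / Real.exp (-(inner ℝ (z j) (θ t) : ℝ)) ≤
            4 * c ^ 2 := by
  refine ⟨32 * c ^ 4, fun C hC d n hd hn δ M η _ _ hM hη hηle z θ hθ0 hupd hmono hnorm hcross
    hdM hML t i j => ?_⟩
  have hc0 : 0 < c := one_pos.trans_le hc
  have hC0 : 0 < C := lt_of_lt_of_le (by positivity) hC
  have hn1 : (1 : ℝ) ≤ n := by exact_mod_cast hn
  have hoff m k (hmk : m ≠ k) : |⟪z m, z k⟫_ℝ| ≤ c * (2 * d / (C * n)) :=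
    (hcross m k hmk).trans <| mul_le_mul_of_nonneg_left (add_sqrt_mul_le_of_le hC0 hn1 hM hdM hML)
      hc0.le
  have hηb : η * (2 * (c * d * Fintype.card (Fin n))) ≤ log 2 := by
    rw [le_div_iff₀ (by positivity)] at hηle
    simpa only [Fintype.card_fin, mul_comm, mul_left_comm, mul_assoc] using hηle
  -- `C ≥ 32 c⁴` is exactly what makes the diagonal dominate the off-diagonal Gram entries.
  have hgap : 2 * (c * d) + 2 * Fintype.card (Fin n) * (4 * c ^ 2) ^ 2 * (c * (2 * d / (C * n)))
      ≤ 4 * c ^ 2 * (d / c) := by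
    rw [Fintype.card_fin]
    field_simp
    nlinarith [mul_le_mul_of_nonneg_right hC (by positivity : (0 : ℝ) ≤ c * d)]
  rw [div_le_iff₀ (exp_pos _)]
  exact expLoss_le_mul_of_gd z hθ0 hupd hmono hnorm hoff (by positivity) hη.le hηb hgap
    (by nlinarith) t i j
end
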